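/- Let b_0(x) = (0,1,0), b_1(x) = (sin φ, 2cos φ/tan 2χ, −cos φ/sin 2χ), b_2(x) = (cos φ, −2 sin φ/tan 2χ, sin φ/sin 2χ) be vector fields in the variables x = (χ, φ, ψ), and let A_i = Σ_j b_i^j ∂_j be the associated first-order differential operators. Then the commutators satisfy [A_0, A_1] = A_2, [A_0, A_2] = −A_1 and [A_1, A_2] = 4A_0, and the determinant of the 3×3 matrix with rows b_0, b_1, b_2 equals −1/sin(2χ). -/

import Mathlib

open Real

noncomputable section

/-- The first-order differential operator `A = Σ_j b^j ∂_j` associated with a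
vector field `b` on `ℝ³`, applied to a function `f` at a point `x`. -/
def vecOp (b : (Fin 3 → ℝ) → (Fin 3 → ℝ)) (f : (Fin 3 → ℝ) → ℝ) (x : Fin 3 → ℝ) : ℝ :=
  fderiv ℝ f x (b x)

/-- The vector field `b₀(x) = (0,1,0)` in the variables `x = (χ, φ, ψ)`. -/
def bf0 : (Fin 3 → ℝ) → (Fin 3 → ℝ) := fun _ => ![0, 1, 0]

/-- The vector field `b₁(x) = (sin φ, 2 cos φ / tan 2χ, − cos φ / sin 2χ)`
(with `1/tan 2χ` written as `cos 2χ / sin 2χ`). -/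
def bf1 : (Fin 3 → ℝ) → (Fin 3 → ℝ) := fun x =>
  ![Real.sin (x 1),
    2 * Real.cos (x 1) * (Real.cos (2 * x 0) / Real.sin (2 * x 0)),
    -(Real.cos (x 1)) / Real.sin (2 * x 0)]

/-- The vector field `b₂(x) = (cos φ, −2 sin φ / tan 2χ, sin φ / sin 2χ)`. -/
def bf2 : (Fin 3 → ℝ) → (Fin 3 → ℝ) := fun x =>
  ![Real.cos (x 1),
    -(2 * Real.sin (x 1)) * (Real.cos (2 * x 0) / Real.sin (2 * x 0)),
    Real.sin (x 1) / Real.sin (2 * x 0)]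

/-!
By symmetry of second derivatives, the commutator of two derivations is the derivation along
the Lie bracket of their vector fields, so the identities reduce to `[b₀, b₁] = b₂`,
`[b₀, b₂] = -b₁` and `[b₁, b₂] = 4 b₀`. Since `b₀ = ∂_φ` is constant, `[b₀, b] = ∂_φ b`;
the last bracket is read off the Jacobians of `b₁` and `b₂`. Each identity, like the
determinant, then comes down to `sin² + cos² = 1`.
-/

open VectorField

lemma vecOp_sub_vecOp_eq_vecOp_lieBracket {f : (Fin 3 → ℝ) → ℝ}
    {b b' : (Fin 3 → ℝ) → (Fin 3 → ℝ)} {x : Fin 3 → ℝ} (hf : ContDiffAt ℝ 2 f x)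
    (hb : DifferentiableAt ℝ b x) (hb' : DifferentiableAt ℝ b' x) :
    vecOp b (vecOp b' f) x - vecOp b' (vecOp b f) x = vecOp (lieBracket ℝ b b') f x :=
  (fderiv_apply_lieBracket hf minSmoothness_of_isRCLikeNormedField.le hb' hb).symm

lemma hasDerivAt_cos_div_sin_two_mul {t : ℝ} (ht : sin (2 * t) ≠ 0) :
    HasDerivAt (fun t => cos (2 * t) / sin (2 * t)) (-2 / sin (2 * t) ^ 2) t := by
  have h2 := (hasDerivAt_id' t).const_mul (2 : ℝ)
  refine (h2.cos.div h2.sin ht).congr_deriv ?_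
  field_simp
  linear_combination (-1) * sin_sq_add_cos_sq (2 * t)

lemma hasDerivAt_inv_sin_two_mul {t : ℝ} (ht : sin (2 * t) ≠ 0) :
    HasDerivAt (fun t => (sin (2 * t))⁻¹) (-2 * cos (2 * t) / sin (2 * t) ^ 2) t := by
  have h2 := (hasDerivAt_id' t).const_mul (2 : ℝ)
  exact (h2.sin.inv ht).congr_deriv (by ring)

lemma hasFDerivAt_bf0 (x : Fin 3 → ℝ) :
    HasFDerivAt bf0 (0 : (Fin 3 → ℝ) →L[ℝ] (Fin 3 → ℝ)) x :=
  hasFDerivAt_const _ x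

section ControlFields

variable {x : Fin 3 → ℝ}

lemma hasFDerivAt_bf1 (hx : sin (2 * x 0) ≠ 0) :
    HasFDerivAt bf1 (Matrix.toLin' !![
      0, cos (x 1), 0;
      -4 * cos (x 1) / sin (2 * x 0) ^ 2, -2 * sin (x 1) * cos (2 * x 0) / sin (2 * x 0), 0;
      2 * cos (x 1) * cos (2 * x 0) / sin (2 * x 0) ^ 2, sin (x 1) / sin (2 * x 0), 0]
      ).toContinuousLinearMap x := by
  have hsin := (hasDerivAt_sin (x 1)).comp_hasFDerivAt x (hasFDerivAt_apply (𝕜 := ℝ) 1 x)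
  have hcos := (hasDerivAt_cos (x 1)).comp_hasFDerivAt x (hasFDerivAt_apply (𝕜 := ℝ) 1 x)
  have hcot := (hasDerivAt_cos_div_sin_two_mul hx).comp_hasFDerivAt x
    (hasFDerivAt_apply (𝕜 := ℝ) 0 x)
  have hcsc := (hasDerivAt_inv_sin_two_mul hx).comp_hasFDerivAt x
    (hasFDerivAt_apply (𝕜 := ℝ) 0 x)
  have h : HasFDerivAt bf1 _ x := hsin.finCons (((hcos.const_mul 2).mul hcot).finCons
    ((hcos.neg.mul hcsc).finCons (hasFDerivAt_const ![] x)))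
  refine h.congr_fderiv ?_
  ext v i
  fin_cases i <;>
    simp [Fin.consEquivL, Fin.consLinearEquiv, Fin.consEquiv, Matrix.mulVec, dotProduct,
      Fin.sum_univ_three] <;> ring

lemma hasFDerivAt_bf2 (hx : sin (2 * x 0) ≠ 0) :
    HasFDerivAt bf2 (Matrix.toLin' !![
      0, -sin (x 1), 0;
      4 * sin (x 1) / sin (2 * x 0) ^ 2, -2 * cos (x 1) * cos (2 * x 0) / sin (2 * x 0), 0;
      -2 * sin (x 1) * cos (2 * x 0) / sin (2 * x 0) ^ 2, cos (x 1) / sin (2 * x 0), 0]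
      ).toContinuousLinearMap x := by
  have hsin := (hasDerivAt_sin (x 1)).comp_hasFDerivAt x (hasFDerivAt_apply (𝕜 := ℝ) 1 x)
  have hcos := (hasDerivAt_cos (x 1)).comp_hasFDerivAt x (hasFDerivAt_apply (𝕜 := ℝ) 1 x)
  have hcot := (hasDerivAt_cos_div_sin_two_mul hx).comp_hasFDerivAt x
    (hasFDerivAt_apply (𝕜 := ℝ) 0 x)
  have hcsc := (hasDerivAt_inv_sin_two_mul hx).comp_hasFDerivAt x
    (hasFDerivAt_apply (𝕜 := ℝ) 0 x)
  have h : HasFDerivAt bf2 _ x := hcos.finCons (((hsin.const_mul 2).neg.mul hcot).finCons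
    ((hsin.mul hcsc).finCons (hasFDerivAt_const ![] x)))
  refine h.congr_fderiv ?_
  ext v i
  fin_cases i <;>
    simp [Fin.consEquivL, Fin.consLinearEquiv, Fin.consEquiv, Matrix.mulVec, dotProduct,
      Fin.sum_univ_three] <;> ring

lemma lieBracket_bf0_bf1 (hx : sin (2 * x 0) ≠ 0) : lieBracket ℝ bf0 bf1 x = bf2 x := by
  rw [lieBracket, (hasFDerivAt_bf0 x).fderiv, (hasFDerivAt_bf1 hx).fderiv]
  ext i
  fin_cases i <;> simp [bf0, bf2]
  ring

lemma lieBracket_bf0_bf2 (hx : sin (2 * x 0) ≠ 0) : lieBracket ℝ bf0 bf2 x = -bf1 x := by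
  rw [lieBracket, (hasFDerivAt_bf0 x).fderiv, (hasFDerivAt_bf2 hx).fderiv]
  ext i
  fin_cases i <;> simp [bf0, bf1] <;> ring

lemma lieBracket_bf1_bf2 (hx : sin (2 * x 0) ≠ 0) :
    lieBracket ℝ bf1 bf2 x = (4 : ℝ) • bf0 x := by
  rw [lieBracket, (hasFDerivAt_bf1 hx).fderiv, (hasFDerivAt_bf2 hx).fderiv]
  ext i
  fin_cases i <;> simp [bf0, bf1, bf2]
  · ring
  · field_simp
    linear_combination (4 - 4 * cos (2 * x 0) ^ 2) * sin_sq_add_cos_sq (x 1) -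
      4 * sin_sq_add_cos_sq (2 * x 0)
  · ring

lemma det_bf0_bf1_bf2 (hx : sin (2 * x 0) ≠ 0) :
    Matrix.det (Matrix.of ![bf0 x, bf1 x, bf2 x]) = -1 / sin (2 * x 0) := by
  simp [Matrix.det_fin_three, bf0, bf1, bf2]
  field_simp
  linear_combination (-1) * sin_sq_add_cos_sq (x 1)

end ControlFields

lemma sin_two_mul_ne_zero_of_mem_Ioo {χ : ℝ} (hχ : χ ∈ Set.Ioo 0 (π / 2)) :
    sin (2 * χ) ≠ 0 :=
  (sin_pos_of_pos_of_lt_pi (by linarith [hχ.1]) (by linarith [hχ.2])).ne'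

/-- The commutators of the operators `A_i` associated with `b₀, b₁, b₂` satisfy
`[A₀,A₁] = A₂`, `[A₀,A₂] = −A₁`, `[A₁,A₂] = 4A₀`, and
`det(b₀,b₁,b₂) = −1/sin 2χ`. -/
theorem commutators_and_det_of_control_fields :
    (∀ f : (Fin 3 → ℝ) → ℝ, ContDiff ℝ 2 f → ∀ x : Fin 3 → ℝ, x 0 ∈ Set.Ioo 0 (π / 2) →
      vecOp bf0 (vecOp bf1 f) x - vecOp bf1 (vecOp bf0 f) x = vecOp bf2 f x ∧
      vecOp bf0 (vecOp bf2 f) x - vecOp bf2 (vecOp bf0 f) x = -vecOp bf1 f x ∧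
      vecOp bf1 (vecOp bf2 f) x - vecOp bf2 (vecOp bf1 f) x = 4 * vecOp bf0 f x) ∧
    (∀ x : Fin 3 → ℝ, x 0 ∈ Set.Ioo 0 (π / 2) →
      Matrix.det (Matrix.of ![bf0 x, bf1 x, bf2 x]) = -1 / Real.sin (2 * x 0)) := by
  refine ⟨fun f hf x hx => ?_, fun x hx => det_bf0_bf1_bf2 (sin_two_mul_ne_zero_of_mem_Ioo hx)⟩
  have hs := sin_two_mul_ne_zero_of_mem_Ioo hx
  have h0 := (hasFDerivAt_bf0 x).differentiableAt
  have h1 := (hasFDerivAt_bf1 hs).differentiableAt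
  have h2 := (hasFDerivAt_bf2 hs).differentiableAt
  have hf' : ContDiffAt ℝ 2 f x := hf.contDiffAt
  rw [vecOp_sub_vecOp_eq_vecOp_lieBracket hf' h0 h1, vecOp_sub_vecOp_eq_vecOp_lieBracket hf' h0 h2,
    vecOp_sub_vecOp_eq_vecOp_lieBracket hf' h1 h2]
  simp only [vecOp, lieBracket_bf0_bf1 hs, lieBracket_bf0_bf2 hs, lieBracket_bf1_bf2 hs, map_neg,
    map_smul, smul_eq_mul, and_self]

end
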